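/- arXiv:1810.09732 — 4 statements merged into one kernel-verified Lean document; each statement's English description precedes it below -/
import Mathlib

section
/- Let A be an n×n tridiagonal matrix with diagonal entries a_1,…,a_n, superdiagonal entries b_1,…,b_{n-1} ≥ 0, and subdiagonal entries c_1,…,c_{n-1} ≥ 0. If the dominance condition a_i ≥ b_i + c_{i-1} holds for all i (with c_0 := 0 and b_n := 0), then A is totally nonnegative. -/
open scoped Classical

def TotallyNonneg {n : ℕ} (A : Matrix (Fin n) (Fin n) ℝ) : Prop :=
  ∀ (k : ℕ) (r c : Fin k → Fin n), StrictMono r → StrictMono c →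
    0 ≤ (A.submatrix r c).det

def TotallyPos {n : ℕ} (A : Matrix (Fin n) (Fin n) ℝ) : Prop :=
  ∀ (k : ℕ) (r c : Fin k → Fin n), StrictMono r → StrictMono c →
    0 < (A.submatrix r c).det

noncomputable def countSignChanges : List ℝ → ℕ
  | a :: b :: t => (if a * b < 0 then 1 else 0) + countSignChanges (b :: t)
  | _ => 0

noncomputable def sMinus {n : ℕ} (y : Fin n → ℝ) : ℕ :=
  countSignChanges ((List.ofFn y).filter (fun x => decide (x ≠ 0)))

noncomputable def sPlus {n : ℕ} (y : Fin n → ℝ) : ℕ :=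
  sSup {k | ∃ z : Fin n → ℝ,
    (∀ i, (y i ≠ 0 → z i = y i) ∧ (y i = 0 → z i = 1 ∨ z i = -1)) ∧
    countSignChanges (List.ofFn z) = k}

def MatIrreducible {n : ℕ} (A : Matrix (Fin n) (Fin n) ℝ) : Prop :=
  ∀ S : Set (Fin n), S.Nonempty → S ≠ Set.univ →
    ∃ i ∈ S, ∃ j ∉ S, A i j ≠ 0

/-!
Induct on the size of the minors, carrying along a stronger bound for the minors whose first
row and first column index coincide, say both equal to `m`: such a minor is at least
`(∑_{j < m} A m j)` times the minor obtained by deleting its first row and column.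

Since `A` is tridiagonal, a minor whose first row and column indices differ has a first row
or first column with a single nonzero entry, so it factors as an entry times a smaller minor.
A minor with both indices equal to `m` expands along two entries as
`A m m · D₁ - A m s₁ · A r₁ m · D₂`; the cross term vanishes unless `r₁ = s₁ = m + 1`, and then
the stronger bound for the smaller minor gives `A (m+1) m · D₂ ≤ D₁`. Row dominance
`A m (m+1) + ∑_{j < m} A m j ≤ A m m` closes the induction.
-/

open Finset Matrix

namespace Matrix
variable {R : Type*} [CommRing R] {k : ℕ}

theorem det_succ_eq_of_row_zero (M : Matrix (Fin (k + 1)) (Fin (k + 1)) R)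
    (h : ∀ j : Fin k, M 0 j.succ = 0) :
    M.det = M 0 0 * (M.submatrix Fin.succ Fin.succ).det := by
  simp [det_succ_row_zero, Fin.sum_univ_succ, h]

theorem det_succ_eq_of_col_zero (M : Matrix (Fin (k + 1)) (Fin (k + 1)) R)
    (h : ∀ i : Fin k, M i.succ 0 = 0) :
    M.det = M 0 0 * (M.submatrix Fin.succ Fin.succ).det := by
  rw [← det_transpose, det_succ_eq_of_row_zero _ h, ← transpose_submatrix, det_transpose]
  rfl

theorem det_succ_succ_eq_of_row_col_zero (M : Matrix (Fin (k + 2)) (Fin (k + 2)) R)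
    (hrow : ∀ j : Fin k, M 0 j.succ.succ = 0) (hcol : ∀ i : Fin k, M i.succ.succ 0 = 0) :
    M.det = M 0 0 * (M.submatrix Fin.succ Fin.succ).det
      - M 0 1 * M 1 0 * (M.submatrix (Fin.succ ∘ Fin.succ) (Fin.succ ∘ Fin.succ)).det := by
  have hminor : (M.submatrix Fin.succ (Fin.succAbove 1)).det
      = M 1 0 * (M.submatrix (Fin.succ ∘ Fin.succ) (Fin.succ ∘ Fin.succ)).det := by
    rw [det_succ_eq_of_col_zero _ (by simpa using hcol)]
    simp [submatrix_submatrix, Function.comp_def]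
  rw [det_succ_row_zero, Fin.sum_univ_succ, Fin.sum_univ_succ]
  simp only [Fin.coe_ofNat_eq_mod, Nat.zero_mod, pow_zero, one_mul, Fin.succAbove_zero,
    Fin.succ_zero_eq_one, Nat.one_mod, pow_one, neg_mul, hminor, Fin.val_succ, hrow, mul_zero,
    zero_mul, sum_const_zero, add_zero]
  ring

end Matrix

section

variable {n k : ℕ} {A : Matrix (Fin n) (Fin n) ℝ}

def IsTridiagonal (A : Matrix (Fin n) (Fin n) ℝ) : Prop :=
  ∀ i j : Fin n, (i : ℕ) + 1 < j → A i j = 0 ∧ A j i = 0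

def lowerRowSum (A : Matrix (Fin n) (Fin n) ℝ) (i : Fin n) : ℝ :=
  ∑ j ∈ Iio i, A i j

def MinorsNonneg (A : Matrix (Fin n) (Fin n) ℝ) (k : ℕ) : Prop :=
  ∀ r s : Fin k → Fin n, StrictMono r → StrictMono s → 0 ≤ (A.submatrix r s).det

def LowerRowSumBound (A : Matrix (Fin n) (Fin n) ℝ) (k : ℕ) : Prop :=
  ∀ r s : Fin (k + 1) → Fin n, StrictMono r → StrictMono s → r 0 = s 0 →
    lowerRowSum A (r 0) * (A.submatrix (r ∘ Fin.succ) (s ∘ Fin.succ)).det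
      ≤ (A.submatrix r s).det

section Tridiagonal

variable (hT : IsTridiagonal A)
include hT

theorem IsTridiagonal.det_submatrix_of_lt {r s : Fin (k + 1) → Fin n} (hs : StrictMono s)
    (h : r 0 < s 0) :
    (A.submatrix r s).det
      = A (r 0) (s 0) * (A.submatrix (r ∘ Fin.succ) (s ∘ Fin.succ)).det := by
  refine det_succ_eq_of_row_zero _ fun j => (hT _ _ ?_).1
  have hj := hs (Fin.succ_pos j)
  simp only [Fin.lt_def] at h hj
  omega

theorem IsTridiagonal.det_submatrix_of_gt {r s : Fin (k + 1) → Fin n} (hr : StrictMono r)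
    (h : s 0 < r 0) :
    (A.submatrix r s).det
      = A (r 0) (s 0) * (A.submatrix (r ∘ Fin.succ) (s ∘ Fin.succ)).det := by
  refine det_succ_eq_of_col_zero _ fun i => (hT _ _ ?_).2
  have hi := hr (Fin.succ_pos i)
  simp only [Fin.lt_def] at h hi
  omega

theorem IsTridiagonal.det_submatrix_of_head_eq {r s : Fin (k + 2) → Fin n} (hr : StrictMono r)
    (hs : StrictMono s) (h : r 0 = s 0) :
    (A.submatrix r s).det
      = A (r 0) (r 0) * (A.submatrix (r ∘ Fin.succ) (s ∘ Fin.succ)).det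
        - A (r 0) (s 1) * A (r 1) (r 0)
          * (A.submatrix (r ∘ Fin.succ ∘ Fin.succ) (s ∘ Fin.succ ∘ Fin.succ)).det := by
  refine (det_succ_succ_eq_of_row_col_zero _ (fun j => (hT _ _ ?_).1)
    (fun i => (hT _ _ ?_).2)).trans (by simp [h])
  · have h01 := hs (Fin.zero_lt_one : (0 : Fin (k + 2)) < 1)
    have h1j := hs (Fin.one_lt_succ_succ j)
    simp only [Fin.lt_def, h] at h01 h1j ⊢
    omega
  · have h01 := hr (Fin.zero_lt_one : (0 : Fin (k + 2)) < 1)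
    have h1i := hr (Fin.one_lt_succ_succ i)
    simp only [Fin.lt_def, ← h] at h01 h1i ⊢
    omega

end Tridiagonal

section Dominance

variable (hnn : ∀ i j, 0 ≤ A i j)
include hnn

theorem lowerRowSum_nonneg (i : Fin n) : 0 ≤ lowerRowSum A i :=
  sum_nonneg fun j _ => hnn i j

theorem le_lowerRowSum {i j : Fin n} (h : j < i) : A i j ≤ lowerRowSum A i :=
  single_le_sum (fun j _ => hnn i j) (mem_Iio.2 h)

variable (hdom : ∀ i, ∑ j ∈ univ.erase i, A i j ≤ A i i)
include hdom

theorem lowerRowSum_le (i : Fin n) : lowerRowSum A i ≤ A i i :=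
  (sum_le_sum_of_subset_of_nonneg (fun j hj => mem_erase.2 ⟨(mem_Iio.1 hj).ne, mem_univ j⟩)
    fun j _ _ => hnn i j).trans (hdom i)

theorem add_lowerRowSum_le {i j : Fin n} (h : i < j) : A i j + lowerRowSum A i ≤ A i i := by
  have hsub : insert j (Iio i) ⊆ univ.erase i := by
    intro l hl
    rcases mem_insert.1 hl with rfl | hl
    · exact mem_erase.2 ⟨h.ne', mem_univ l⟩
    · exact mem_erase.2 ⟨(mem_Iio.1 hl).ne, mem_univ l⟩
  have := (sum_le_sum_of_subset_of_nonneg hsub fun l _ _ => hnn i l).trans (hdom i)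
  rwa [sum_insert (by simp [h.le])] at this

end Dominance

theorem minorsNonneg_zero : MinorsNonneg A 0 := fun r s _ _ => by simp

theorem lowerRowSumBound_zero (hnn : ∀ i j, 0 ≤ A i j)
    (hdom : ∀ i, ∑ j ∈ univ.erase i, A i j ≤ A i i) : LowerRowSumBound A 0 := by
  intro r s _ _ h
  simpa [det_fin_one, ← h] using lowerRowSum_le hnn hdom (r 0)

theorem IsTridiagonal.minorsNonneg_succ (hT : IsTridiagonal A) (hnn : ∀ i j, 0 ≤ A i j)
    (hP : MinorsNonneg A k) (hQ : LowerRowSumBound A k) : MinorsNonneg A (k + 1) := by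
  intro r s hr hs
  have htail := hP _ _ (hr.comp Fin.strictMono_succ) (hs.comp Fin.strictMono_succ)
  rcases lt_trichotomy (r 0) (s 0) with h | h | h
  · rw [hT.det_submatrix_of_lt hs h]
    exact mul_nonneg (hnn _ _) htail
  · exact (mul_nonneg (lowerRowSum_nonneg hnn _) htail).trans (hQ r s hr hs h)
  · rw [hT.det_submatrix_of_gt hr h]
    exact mul_nonneg (hnn _ _) htail

theorem IsTridiagonal.lowerRowSumBound_succ (hT : IsTridiagonal A) (hnn : ∀ i j, 0 ≤ A i j)
    (hdom : ∀ i, ∑ j ∈ univ.erase i, A i j ≤ A i i) (hP : MinorsNonneg A k)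
    (hP' : MinorsNonneg A (k + 1)) (hQ : LowerRowSumBound A k) :
    LowerRowSumBound A (k + 1) := by
  intro r s hr hs h0
  have hr' := hr.comp Fin.strictMono_succ
  have hs' := hs.comp Fin.strictMono_succ
  set D₁ := (A.submatrix (r ∘ Fin.succ) (s ∘ Fin.succ)).det
  set D₂ := (A.submatrix (r ∘ Fin.succ ∘ Fin.succ) (s ∘ Fin.succ ∘ Fin.succ)).det
  have hD₁ : 0 ≤ D₁ := hP' _ _ hr' hs'
  have hD₂ : 0 ≤ D₂ := hP _ _ (hr'.comp Fin.strictMono_succ) (hs'.comp Fin.strictMono_succ)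
  have hr01 : r 0 < r 1 := hr Fin.zero_lt_one
  have hs01 : r 0 < s 1 := h0 ▸ hs Fin.zero_lt_one
  have hcross : A (r 0) (s 1) * A (r 1) (r 0) * D₂ ≤ A (r 0) (s 1) * D₁ := by
    rcases eq_or_ne (r 1) (s 1) with h1 | h1
    · rw [mul_assoc]
      refine mul_le_mul_of_nonneg_left ?_ (hnn _ _)
      calc A (r 1) (r 0) * D₂ ≤ lowerRowSum A (r 1) * D₂ :=
            mul_le_mul_of_nonneg_right (le_lowerRowSum hnn hr01) hD₂
        _ ≤ D₁ := hQ _ _ hr' hs' h1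
    · have hfar : (r 0 : ℕ) + 1 < r 1 ∨ (r 0 : ℕ) + 1 < s 1 := by
        rw [Ne, Fin.ext_iff] at h1
        rw [Fin.lt_def] at hr01 hs01
        omega
      have hzero : A (r 0) (s 1) * A (r 1) (r 0) = 0 := by
        rcases hfar with h | h
        · rw [(hT _ _ h).2, mul_zero]
        · rw [(hT _ _ h).1, zero_mul]
      rw [hzero, zero_mul]
      exact mul_nonneg (hnn _ _) hD₁
  rw [hT.det_submatrix_of_head_eq hr hs h0]
  have := mul_le_mul_of_nonneg_right (add_lowerRowSum_le hnn hdom hs01) hD₁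
  linarith

theorem IsTridiagonal.totallyNonneg (hT : IsTridiagonal A) (hnn : ∀ i j, 0 ≤ A i j)
    (hdom : ∀ i, ∑ j ∈ univ.erase i, A i j ≤ A i i) : TotallyNonneg A := by
  have key : ∀ k, MinorsNonneg A k ∧ LowerRowSumBound A k := by
    intro k
    induction k with
    | zero => exact ⟨minorsNonneg_zero, lowerRowSumBound_zero hnn hdom⟩
    | succ k ih =>
      have hP := hT.minorsNonneg_succ hnn ih.1 ih.2
      exact ⟨hP, hT.lowerRowSumBound_succ hnn hdom ih.1 hP ih.2⟩
  exact fun k => (key k).1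

theorem Fin.sum_ite_val_eq {M : Type*} [AddCommMonoid M] (f : Fin n → M) (m : ℕ) :
    ∑ j : Fin n, (if (j : ℕ) = m then f j else 0) = if h : m < n then f ⟨m, h⟩ else 0 := by
  split_ifs with h
  · rw [sum_eq_single ⟨m, h⟩ (fun j _ hj => if_neg fun hjm => hj (Fin.ext hjm)) (by simp)]
    simp
  · exact sum_eq_zero fun j _ => if_neg (by omega)

def tridiagonal (a b c : Fin n → ℝ) : Matrix (Fin n) (Fin n) ℝ :=
  of fun i j =>
    if j = i then a i
    else if j.val = i.val + 1 then b i
    else if i.val = j.val + 1 then c j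
    else 0

theorem isTridiagonal_tridiagonal (a b c : Fin n → ℝ) : IsTridiagonal (tridiagonal a b c) := by
  intro i j h
  simp only [tridiagonal, of_apply, Fin.ext_iff]
  constructor <;> split_ifs <;> first | omega | rfl

theorem tridiagonal_nonneg {a b c : Fin n → ℝ} (ha : ∀ i, 0 ≤ a i) (hb : ∀ i, 0 ≤ b i)
    (hc : ∀ i, 0 ≤ c i) (i j : Fin n) : 0 ≤ tridiagonal a b c i j := by
  simp only [tridiagonal, of_apply]
  split_ifs
  exacts [ha i, hb i, hc j, le_rfl]

theorem sum_erase_tridiagonal (a b c : Fin n → ℝ) (i : Fin n) :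
    ∑ j ∈ univ.erase i, tridiagonal a b c i j = (if i.val + 1 < n then b i else 0) +
      (if h : 0 < i.val then c ⟨i.val - 1, by omega⟩ else 0) := by
  have hentry : ∀ j ∈ univ.erase i, tridiagonal a b c i j =
      (if (j : ℕ) = i + 1 then b i else 0) +
        (if 0 < (i : ℕ) then (if (j : ℕ) = i - 1 then c j else 0) else 0) := by
    intro j hj
    have hji : (j : ℕ) ≠ i := fun h => ne_of_mem_erase hj (Fin.ext h)
    simp only [tridiagonal, of_apply, if_neg (ne_of_mem_erase hj)]
    split_ifs <;> first | omega | simp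
  rw [sum_congr rfl hentry, sum_erase _ (by split_ifs <;> first | omega | simp),
    sum_add_distrib, Fin.sum_ite_val_eq, sum_ite_irrel, Fin.sum_ite_val_eq, sum_const_zero]
  simp only [dite_eq_ite]
  split_ifs <;> first | omega | rfl

end

theorem tridiagonal_dominance_tn {n : ℕ} (a b c : Fin n → ℝ)
    (A : Matrix (Fin n) (Fin n) ℝ)
    (hA : ∀ i j : Fin n, A i j =
      if j = i then a i
      else if j.val = i.val + 1 then b i
      else if i.val = j.val + 1 then c j
      else 0)
    (hb : ∀ i, 0 ≤ b i) (hc : ∀ i, 0 ≤ c i)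
    (hdom : ∀ i : Fin n, (if i.val + 1 < n then b i else 0) +
        (if h : 0 < i.val then c ⟨i.val - 1, by have := i.isLt; omega⟩ else 0) ≤ a i) :
    TotallyNonneg A := by
  obtain rfl : A = tridiagonal a b c := Matrix.ext hA
  have ha : ∀ i, 0 ≤ a i := fun i =>
    (add_nonneg (by split_ifs <;> simp [hb]) (by split_ifs <;> simp [hc])).trans (hdom i)
  refine (isTridiagonal_tridiagonal a b c).totallyNonneg (tridiagonal_nonneg ha hb hc) fun i => ?_
  rw [sum_erase_tridiagonal]
  simpa [tridiagonal] using hdom i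
end

section
/- Let A = I + p·E_{i,i-1} (or A = I + p·E_{i-1,i}) with p ≥ 0 be a totally nonnegative elementary bidiagonal matrix. Then for every x ∈ ℝⁿ, s⁻(Ax) ≤ s⁻(x) and s⁺(Ax) ≤ s⁺(x). -/
open scoped Classical

/-!
The new entry `x i + p * x j` of `A x` is zero or has the sign of `x i` or of the neighbouring
entry `x j`. A zero entry drops out of the sign sequence, and an entry with the sign of its
neighbour merely repeats it, so the change creates no sign change: this bounds `s⁻`. For `s⁺`,
a `±1`-completion `z'` of `A x` is compared with the completion of `x` that agrees with `z'` off
`i`; by the same sign analysis `z'` arises from it by such an admissible change at `i`.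
-/

open List

section SignLemmas

variable {a b c u v p : ℝ}

theorem mul_neg_iff_of_sign_eq (hu : SignType.sign a = SignType.sign u)
    (hv : SignType.sign b = SignType.sign v) : a * b < 0 ↔ u * v < 0 := by
  rw [← sign_eq_neg_one_iff, ← sign_eq_neg_one_iff (a := u * v), sign_mul, sign_mul, hu, hv]

theorem ite_mul_neg_le_add (hb : b ≠ 0) :
    (if a * c < 0 then 1 else 0 : ℕ) ≤
      (if a * b < 0 then 1 else 0) + (if b * c < 0 then 1 else 0) := by
  have hbb : 0 < b * b := mul_self_pos.mpr hb
  split_ifs <;> first | omega | nlinarith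

theorem sign_eq_or_sign_eq_of_mul_neg (hv : v ≠ 0) (hab : a * b < 0) :
    SignType.sign v = SignType.sign a ∨ SignType.sign v = SignType.sign b := by
  have hv' : SignType.sign v ≠ 0 := sign_ne_zero.mpr hv
  have hab' : SignType.sign a * SignType.sign b = -1 := by rwa [← sign_mul, sign_eq_neg_one_iff]
  generalize SignType.sign v = s at *
  generalize SignType.sign a = t at *
  generalize SignType.sign b = r at *
  revert s t r
  decide

theorem sign_add_mul_eq_or (hp : 0 ≤ p) :
    a + p * b = 0 ∨ SignType.sign (a + p * b) = SignType.sign a ∨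
      SignType.sign (a + p * b) = SignType.sign b := by
  rcases lt_trichotomy (a + p * b) 0 with h | h | h
  · rcases lt_or_ge a 0 with ha | ha
    · simp [sign_neg h, sign_neg ha]
    · have hb : b < 0 := by nlinarith
      simp [sign_neg h, sign_neg hb]
  · exact Or.inl h
  · rcases lt_or_ge 0 a with ha | ha
    · simp [sign_pos h, sign_pos ha]
    · have hb : 0 < b := by nlinarith
      simp [sign_pos h, sign_pos hb]

theorem sign_eq_or_of_completion_add_mul {a b p w : ℝ} (hp : 0 < p) (hb : b ≠ 0) (hw : w ≠ 0)
    (hw' : a + p * b ≠ 0 → w = a + p * b) :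
    SignType.sign w = SignType.sign (if a = 0 then 1 else a) ∨
      SignType.sign w = SignType.sign b := by
  by_cases ha : a = 0
  · rw [hw' (by simp [ha, hp.ne', hb]), ha, zero_add, sign_mul, sign_pos hp, one_mul]
    exact .inr rfl
  rw [if_neg ha]
  by_cases hab : a + p * b = 0
  · refine sign_eq_or_sign_eq_of_mul_neg hw ?_
    rw [show a = -(p * b) by linarith]
    nlinarith [mul_self_pos.mpr hb]
  · rw [hw' hab]
    exact (sign_add_mul_eq_or hp.le).resolve_left hab

end SignLemmas

section CountSignChanges

@[simp]
theorem countSignChanges_cons_cons (a b : ℝ) (l : List ℝ) :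
    countSignChanges (a :: b :: l) =
      (if a * b < 0 then 1 else 0) + countSignChanges (b :: l) := rfl

@[simp]
theorem countSignChanges_singleton (a : ℝ) : countSignChanges [a] = 0 := rfl

theorem countSignChanges_le_cons (a : ℝ) (l : List ℝ) :
    countSignChanges l ≤ countSignChanges (a :: l) := by
  cases l <;> simp [countSignChanges]

theorem countSignChanges_append_cons (P : List ℝ) (a : ℝ) (Q : List ℝ) :
    countSignChanges (P ++ a :: Q) = countSignChanges (P ++ [a]) + countSignChanges (a :: Q) := by
  induction P with
  | nil => simp
  | cons c P ih =>
    cases P with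
    | nil => simp
    | cons d P => simp only [cons_append, countSignChanges_cons_cons] at ih ⊢; omega

theorem countSignChanges_append_cons_cons_self (P : List ℝ) (b : ℝ) (Q : List ℝ) :
    countSignChanges (P ++ b :: b :: Q) = countSignChanges (P ++ b :: Q) := by
  rw [countSignChanges_append_cons P b (b :: Q), countSignChanges_append_cons P b Q,
    countSignChanges_cons_cons,
    if_neg (not_lt.mpr (mul_self_nonneg b)), zero_add]

theorem countSignChanges_append_le_append_cons {a : ℝ} (ha : a ≠ 0) (P Q : List ℝ) :
    countSignChanges (P ++ Q) ≤ countSignChanges (P ++ a :: Q) := by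
  induction P with
  | nil => exact countSignChanges_le_cons a Q
  | cons c P ih =>
    cases P with
    | nil =>
      cases Q with
      | nil => simp
      | cons d Q =>
        simp only [nil_append, cons_append, countSignChanges_cons_cons]
        have := ite_mul_neg_le_add (a := c) (c := d) ha
        omega
    | cons d P => simp only [cons_append, countSignChanges_cons_cons] at ih ⊢; omega

theorem countSignChanges_le_length : ∀ l : List ℝ, countSignChanges l ≤ l.length
  | [] | [_] => by simp [countSignChanges]
  | _ :: b :: l => by
    have := countSignChanges_le_length (b :: l)
    simp only [countSignChanges_cons_cons, length_cons] at this ⊢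
    split <;> omega

theorem countSignChanges_congr_sign {l m : List ℝ}
    (h : Forall₂ (fun u v => SignType.sign u = SignType.sign v) l m) :
    countSignChanges l = countSignChanges m := by
  induction h with
  | nil => rfl
  | cons hab htail ih =>
    cases htail with
    | nil => rfl
    | cons hcd _ =>
      simp only [countSignChanges_cons_cons] at ih ⊢
      simp only [ih, mul_neg_iff_of_sign_eq hab hcd]

end CountSignChanges

noncomputable def sMinusList (l : List ℝ) : ℕ :=
  countSignChanges (l.filter (fun x => decide (x ≠ 0)))

section SMinusList

theorem sMinus_eq_sMinusList {n : ℕ} (y : Fin n → ℝ) : sMinus y = sMinusList (ofFn y) := rfl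

theorem sMinusList_eq_of_forall_ne_zero {l : List ℝ} (hl : ∀ a ∈ l, a ≠ 0) :
    sMinusList l = countSignChanges l := by
  rw [sMinusList, filter_eq_self.mpr (by simpa using hl)]

theorem sMinusList_append_zero_cons (P Q : List ℝ) :
    sMinusList (P ++ 0 :: Q) = sMinusList (P ++ Q) := by
  simp [sMinusList]

theorem sMinusList_append_le_append_cons (P : List ℝ) (a : ℝ) (Q : List ℝ) :
    sMinusList (P ++ Q) ≤ sMinusList (P ++ a :: Q) := by
  by_cases ha : a = 0
  · rw [ha, sMinusList_append_zero_cons]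
  · simpa [sMinusList, ha] using countSignChanges_append_le_append_cons ha _ _

theorem sMinusList_append_cons_cons_self (P : List ℝ) (b : ℝ) (Q : List ℝ) :
    sMinusList (P ++ b :: b :: Q) = sMinusList (P ++ b :: Q) := by
  by_cases hb : b = 0
  · simp [sMinusList, hb]
  · simpa [sMinusList, hb] using countSignChanges_append_cons_cons_self _ b _

theorem sMinusList_append_cons_congr_sign (P : List ℝ) {u v : ℝ}
    (h : SignType.sign u = SignType.sign v) (Q : List ℝ) :
    sMinusList (P ++ u :: Q) = sMinusList (P ++ v :: Q) := by
  by_cases hu : u = 0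
  · rw [hu, sign_zero, eq_comm, sign_eq_zero_iff] at h
    rw [hu, h]
  · have hv : v ≠ 0 := sign_ne_zero.mp (h ▸ sign_ne_zero.mpr hu)
    have hrefl (l : List ℝ) :
        Forall₂ (fun x y : ℝ => SignType.sign x = SignType.sign y) l l := forall₂_same.mpr fun _ _ => rfl
    simpa [sMinusList, hu, hv] using
      countSignChanges_congr_sign (rel_append (hrefl _) (.cons h (hrefl _)))

variable {a b v : ℝ}

theorem sMinusList_replace_before_le (P Q : List ℝ)
    (hv : v = 0 ∨ SignType.sign v = SignType.sign a ∨ SignType.sign v = SignType.sign b) :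
    sMinusList (P ++ v :: b :: Q) ≤ sMinusList (P ++ a :: b :: Q) := by
  rcases hv with rfl | hva | hvb
  · rw [sMinusList_append_zero_cons]
    exact sMinusList_append_le_append_cons _ _ _
  · rw [sMinusList_append_cons_congr_sign P hva]
  · rw [sMinusList_append_cons_congr_sign P hvb, sMinusList_append_cons_cons_self]
    exact sMinusList_append_le_append_cons _ _ _

theorem sMinusList_replace_after_le (P Q : List ℝ)
    (hv : v = 0 ∨ SignType.sign v = SignType.sign a ∨ SignType.sign v = SignType.sign b) :
    sMinusList (P ++ b :: v :: Q) ≤ sMinusList (P ++ b :: a :: Q) := by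
  have hsplit (w : ℝ) : P ++ b :: w :: Q = (P ++ [b]) ++ w :: Q := by simp
  rw [hsplit, hsplit]
  rcases hv with rfl | hva | hvb
  · rw [sMinusList_append_zero_cons]
    exact sMinusList_append_le_append_cons _ _ _
  · rw [sMinusList_append_cons_congr_sign _ hva]
  · rw [sMinusList_append_cons_congr_sign _ hvb, ← hsplit, sMinusList_append_cons_cons_self]
    simpa using sMinusList_append_le_append_cons (P ++ [b]) a Q

end SMinusList

section Update

variable {n : ℕ} (x : Fin n → ℝ) {i j : Fin n}

theorem ofFn_update_eq_set (i : Fin n) (v : ℝ) :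
    ofFn (Function.update x i v) = (ofFn x).set i v :=
  ext_getElem (by simp) fun k _ _ => by
    simp [getElem_set, Function.update_apply, Fin.ext_iff, eq_comm]

theorem ofFn_update_of_succ_eq (h : i.val + 1 = j.val) (v : ℝ) :
    ofFn (Function.update x i v) = (ofFn x).take i ++ v :: x j :: (ofFn x).drop (j + 1) := by
  have hj : i.val + 1 < (ofFn x).length := by simp [h]
  rw [ofFn_update_eq_set, set_eq_take_append_cons_drop, if_pos (by simp),
    drop_eq_getElem_cons hj]
  simp [h]

theorem ofFn_update_of_eq_succ (h : j.val + 1 = i.val) (v : ℝ) :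
    ofFn (Function.update x i v) = (ofFn x).take j ++ x j :: v :: (ofFn x).drop (i + 1) := by
  rw [ofFn_update_eq_set, set_eq_take_append_cons_drop, if_pos (by simp), ← h, take_add_one]
  simp

end Update

theorem sMinus_update_le {n : ℕ} (x : Fin n → ℝ) {i j : Fin n}
    (hij : j.val + 1 = i.val ∨ i.val + 1 = j.val) {v : ℝ}
    (hv : v = 0 ∨ SignType.sign v = SignType.sign (x i) ∨
      SignType.sign v = SignType.sign (x j)) :
    sMinus (Function.update x i v) ≤ sMinus x := by
  conv_rhs => rw [← Function.update_eq_self i x]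
  rw [sMinus_eq_sMinusList, sMinus_eq_sMinusList]
  rcases hij with h | h
  · rw [ofFn_update_of_eq_succ x h, ofFn_update_of_eq_succ x h]
    exact sMinusList_replace_after_le _ _ hv
  · rw [ofFn_update_of_succ_eq x h, ofFn_update_of_succ_eq x h]
    exact sMinusList_replace_before_le _ _ hv

def SignCompletion {n : ℕ} (y z : Fin n → ℝ) : Prop :=
  ∀ i, (y i ≠ 0 → z i = y i) ∧ (y i = 0 → z i = 1 ∨ z i = -1)

namespace SignCompletion

variable {n : ℕ} {y z : Fin n → ℝ}

theorem ne_zero (hz : SignCompletion y z) (k : Fin n) : z k ≠ 0 := by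
  by_cases hk : y k = 0
  · rcases (hz k).2 hk with h | h <;> simp [h]
  · rwa [(hz k).1 hk]

theorem sMinus_eq (hz : SignCompletion y z) : sMinus z = countSignChanges (ofFn z) :=
  sMinusList_eq_of_forall_ne_zero (by simpa [mem_ofFn] using hz.ne_zero)

theorem exists_signCompletion (y : Fin n → ℝ) : ∃ z, SignCompletion y z :=
  ⟨fun k => if y k = 0 then 1 else y k,
    fun _ => ⟨fun h => if_neg h, fun h => .inl (if_pos h)⟩⟩

end SignCompletion

section SPlus

variable {n : ℕ} {x y : Fin n → ℝ}

theorem sPlus_eq_sSup (y : Fin n → ℝ) :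
    sPlus y = sSup {k | ∃ z, SignCompletion y z ∧ countSignChanges (ofFn z) = k} := rfl

theorem sMinus_le_sPlus {z : Fin n → ℝ} (hz : SignCompletion x z) : sMinus z ≤ sPlus x := by
  refine le_csSup ⟨n, ?_⟩ ⟨z, hz, hz.sMinus_eq.symm⟩
  rintro _ ⟨w, -, rfl⟩
  simpa using countSignChanges_le_length (ofFn w)

theorem sPlus_le_sPlus
    (h : ∀ z', SignCompletion y z' → ∃ z, SignCompletion x z ∧ sMinus z' ≤ sMinus z) :
    sPlus y ≤ sPlus x := by
  obtain ⟨z₀, hz₀⟩ := SignCompletion.exists_signCompletion y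
  rw [sPlus_eq_sSup]
  refine csSup_le ⟨_, z₀, hz₀, rfl⟩ ?_
  rintro _ ⟨z', hz', rfl⟩
  obtain ⟨z, hz, hle⟩ := h z' hz'
  rw [← hz'.sMinus_eq]
  exact hle.trans (sMinus_le_sPlus hz)

end SPlus

theorem sPlus_update_add_mul_le {n : ℕ} (x : Fin n → ℝ) {i j : Fin n}
    (hij : j.val + 1 = i.val ∨ i.val + 1 = j.val) {p : ℝ} (hp : 0 ≤ p) :
    sPlus (Function.update x i (x i + p * x j)) ≤ sPlus x := by
  by_cases h0 : p * x j = 0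
  · rw [h0, add_zero, Function.update_eq_self]
  have hpos : 0 < p := hp.lt_of_ne (by rintro rfl; simp at h0)
  have hxj : x j ≠ 0 := right_ne_zero_of_mul h0
  have hji : j ≠ i := by rintro rfl; omega
  refine sPlus_le_sPlus fun z' hz' => ?_
  have hz'j : z' j = x j := by simpa [Function.update_of_ne hji, hxj] using (hz' j).1
  set c : ℝ := if x i = 0 then 1 else x i
  have hc : SignCompletion x (Function.update z' i c) := by
    intro k
    by_cases hk : k = i
    · subst hk; by_cases hxk : x k = 0 <;> simp [c, hxk]
    · simpa [Function.update_of_ne hk] using hz' k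
  have hsign : SignType.sign (z' i) = SignType.sign c ∨
      SignType.sign (z' i) = SignType.sign (x j) :=
    sign_eq_or_of_completion_add_mul hpos hxj (hz'.ne_zero i)
      (fun h => by simpa [h] using (hz' i).1)
  refine ⟨_, hc, ?_⟩
  calc sMinus z' = sMinus (Function.update (Function.update z' i c) i (z' i)) := by simp
    _ ≤ sMinus (Function.update z' i c) :=
      sMinus_update_le _ hij (.inr (by simpa [Function.update_of_ne hji, hz'j] using hsign))

theorem Matrix.one_add_smul_single_mulVec {n R : Type*} [Fintype n] [DecidableEq n]
    [Semiring R] (p : R) (i j : n) (x : n → R) :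
    ((1 : Matrix n n R) + p • Matrix.single i j 1).mulVec x =
      Function.update x i (x i + p * x j) := by
  ext k
  rcases eq_or_ne k i with rfl | hk <;> simp [Matrix.add_mulVec, Matrix.single_mulVec, *]

theorem eb_svdp {n : ℕ} (p : ℝ) (hp : 0 ≤ p) (i j : Fin n)
    (hij : j.val + 1 = i.val ∨ i.val + 1 = j.val)
    (A : Matrix (Fin n) (Fin n) ℝ)
    (hA : A = (1 : Matrix (Fin n) (Fin n) ℝ) + p • Matrix.single i j 1) :
    ∀ x : Fin n → ℝ, sMinus (A.mulVec x) ≤ sMinus x ∧ sPlus (A.mulVec x) ≤ sPlus x := by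
  intro x
  rw [hA, Matrix.one_add_smul_single_mulVec]
  exact ⟨sMinus_update_le x hij (sign_add_mul_eq_or hp), sPlus_update_add_mul_le x hij hp⟩
end

section
/- If A is an n×n totally nonnegative matrix, then for every x ∈ ℝⁿ, s⁻(Ax) ≤ s⁻(x). -/
open scoped Classical

/-!
Suppose `s⁻(A x) > k = s⁻(x)`. Cutting the indices into `k + 1` consecutive blocks on which `x`
has the constant sign `(-1) ^ j σ` writes `x = V c` with `c ∈ ℝ^(k+1)` and `V ≥ 0` having one
entry per row, placed monotonically, so `A V` is again totally nonnegative. Picking `k + 2` indices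
at which `A x` strictly alternates yields a `(k + 2) × (k + 1)` totally nonnegative matrix `W` and
a vector `c` with `W c` strictly alternating. No such pair exists: `det [W | W c] = 0`, expanded
along the last column, is a sum of nonnegative terms, so the minor of `W` on its first `k + 1` rows
vanishes; a kernel vector of that minor lets one make a coordinate of `c` zero, and deleting that
column and the last row gives a smaller such pair.
-/

open Matrix

noncomputable def firstNonzero {n : ℕ} (y : Fin n → ℝ) : ℝ :=
  ((List.ofFn y).filter (fun x => decide (x ≠ 0))).headD 0

lemma countSignChanges_cons (a : ℝ) (l : List ℝ) :
    countSignChanges (a :: l) = (if a * l.headD 0 < 0 then 1 else 0) + countSignChanges l := by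
  cases l <;> simp [countSignChanges]

lemma filter_ofFn_zero {n : ℕ} :
    (List.ofFn (0 : Fin n → ℝ)).filter (fun x => decide (x ≠ 0)) = [] :=
  List.filter_eq_nil_iff.mpr fun x hx => by simp_all [List.mem_ofFn]

lemma sMinus_zero {n : ℕ} : sMinus (0 : Fin n → ℝ) = 0 := by
  rw [sMinus, filter_ofFn_zero]
  rfl

lemma firstNonzero_zero {n : ℕ} : firstNonzero (0 : Fin n → ℝ) = 0 := by
  rw [firstNonzero, filter_ofFn_zero, List.headD_nil]

lemma firstNonzero_cons {n : ℕ} (a : ℝ) (t : Fin n → ℝ) :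
    firstNonzero (Fin.cons a t : Fin (n + 1) → ℝ) = if a = 0 then firstNonzero t else a := by
  unfold firstNonzero
  split_ifs with ha <;> simp [ha]

lemma sMinus_cons {n : ℕ} (a : ℝ) (t : Fin n → ℝ) :
    sMinus (Fin.cons a t : Fin (n + 1) → ℝ) =
      sMinus t + if a * firstNonzero t < 0 then 1 else 0 := by
  unfold sMinus firstNonzero
  by_cases ha : a = 0 <;> simp [ha, countSignChanges_cons, add_comm]

lemma Fin.monotone_cons {α : Type*} [Preorder α] {n : ℕ} {f : Fin n → α} {a : α}
    (hf : Monotone f) (ha : ∀ i, a ≤ f i) : Monotone (Fin.cons a f : Fin (n + 1) → α) :=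
  monotone_iff_forall_lt.2 ((Fin.liftFun_cons (· ≤ ·)).2 ⟨ha, monotone_iff_forall_lt.1 hf⟩)

/-- `b` cuts `Fin n` into `s + 1` consecutive blocks; on block `j` every entry of `y` is zero or
has the sign of `(-1) ^ j * σ`, and some entry is nonzero. -/
structure SignBlocks {n s : ℕ} (y : Fin n → ℝ) (σ : ℝ) (b : Fin n → Fin (s + 1)) :
    Prop where
  monotone : Monotone b
  nonneg : ∀ i, 0 ≤ σ * ((-1) ^ (b i : ℕ) * y i)
  exists_pos : ∀ j, ∃ i, b i = j ∧ 0 < σ * ((-1) ^ (j : ℕ) * y i)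

namespace SignBlocks

variable {n s : ℕ} {y : Fin n → ℝ} {σ : ℝ} {b : Fin n → Fin (s + 1)}

lemma sign_ne_zero (h : SignBlocks y σ b) : σ ≠ 0 := by
  obtain ⟨i, -, hpos⟩ := h.exists_pos 0
  exact left_ne_zero_of_mul hpos.ne'

lemma of_mul_pos (h : SignBlocks y σ b) {τ : ℝ} (hτσ : 0 < τ * σ) : SignBlocks y τ b := by
  have key : ∀ u, (0 ≤ σ * u → 0 ≤ τ * u) ∧ (0 < σ * u → 0 < τ * u) := by
    intro u
    rcases mul_pos_iff.mp hτσ with ⟨hτ, hσ⟩ | ⟨hτ, hσ⟩ <;>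
      exact ⟨fun hu => by nlinarith, fun hu => by nlinarith⟩
  refine ⟨h.monotone, fun i => (key _).1 (h.nonneg i), fun j => ?_⟩
  obtain ⟨i, hi, hpos⟩ := h.exists_pos j
  exact ⟨i, hi, (key _).2 hpos⟩

lemma cons (h : SignBlocks y σ b) {a : ℝ} (ha : 0 ≤ a * σ) :
    SignBlocks (Fin.cons a y : Fin (n + 1) → ℝ) σ (Fin.cons 0 b) := by
  refine ⟨Fin.monotone_cons h.monotone fun _ => Fin.zero_le _, fun i => ?_, fun j => ?_⟩
  · cases i using Fin.cases
    · simpa [mul_comm] using ha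
    · simpa using h.nonneg _
  · obtain ⟨i, hi, hpos⟩ := h.exists_pos j
    exact ⟨i.succ, by simpa using hi, by simpa using hpos⟩

lemma cons_of_mul_neg (h : SignBlocks y σ b) {a : ℝ} (ha : a * σ < 0) :
    SignBlocks (Fin.cons a y : Fin (n + 1) → ℝ) a (Fin.cons 0 (Fin.succ ∘ b)) := by
  have h' := h.of_mul_pos (τ := -a) (by linarith)
  refine ⟨Fin.monotone_cons (Fin.strictMono_succ.monotone.comp h.monotone) fun _ => Fin.zero_le _,
    fun i => ?_, fun j => ?_⟩
  · cases i using Fin.cases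
    · simpa using mul_self_nonneg a
    · simpa [pow_succ] using h'.nonneg _
  · cases j using Fin.cases
    · exact ⟨0, rfl, by simpa using mul_self_pos.2 (left_ne_zero_of_mul ha.ne)⟩
    · rename_i j
      obtain ⟨i, hi, hpos⟩ := h'.exists_pos j
      exact ⟨i.succ, by simp [hi], by simpa [pow_succ] using hpos⟩

lemma exists_strictMono_alternating (h : SignBlocks y σ b) :
    ∃ r : Fin (s + 1) → Fin n, StrictMono r ∧
      ∀ j : Fin (s + 1), 0 < σ * ((-1) ^ (j : ℕ) * y (r j)) := by
  choose r hbr hpos using h.exists_pos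
  exact ⟨r, fun j j' hjj' => h.monotone.reflect_lt (by rwa [hbr, hbr]), hpos⟩

end SignBlocks

lemma signBlocks_cons_zero {n : ℕ} {a : ℝ} (ha : a ≠ 0) :
    SignBlocks (Fin.cons a 0 : Fin (n + 1) → ℝ) a (fun _ => (0 : Fin 1)) := by
  refine ⟨monotone_const, fun i => ?_, fun j => ⟨0, Subsingleton.elim (α := Fin 1) _ _, ?_⟩⟩
  · cases i using Fin.cases <;> simp [mul_self_nonneg]
  · simpa [Fin.val_eq_zero j] using mul_self_pos.2 ha

theorem exists_signBlocks : ∀ {n : ℕ} (y : Fin n → ℝ), y ≠ 0 →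
    ∃ b : Fin n → Fin (sMinus y + 1), SignBlocks y (firstNonzero y) b
  | 0, y, hy => absurd (Subsingleton.elim y 0) hy
  | n + 1, y, hy => by
    obtain ⟨a, t, rfl⟩ : ∃ a t, y = Fin.cons a t :=
      ⟨y 0, Fin.tail y, (Fin.cons_self_tail y).symm⟩
    rw [sMinus_cons, firstNonzero_cons]
    by_cases ha : a = 0
    · subst ha
      have ht : t ≠ 0 := fun ht => hy (by rw [ht]; exact Matrix.cons_zero_zero)
      obtain ⟨b, hb⟩ := exists_signBlocks t ht
      rw [if_pos rfl, zero_mul, if_neg (lt_irrefl 0)]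
      exact ⟨_, hb.cons (zero_mul _).ge⟩
    rw [if_neg ha]
    by_cases ht : t = 0
    · subst ht
      rw [firstNonzero_zero, sMinus_zero, mul_zero, if_neg (lt_irrefl 0)]
      exact ⟨_, signBlocks_cons_zero ha⟩
    obtain ⟨b, hb⟩ := exists_signBlocks t ht
    rcases (mul_ne_zero ha hb.sign_ne_zero).lt_or_gt with hneg | hpos
    · rw [if_pos hneg]
      exact ⟨_, hb.cons_of_mul_neg hneg⟩
    · rw [if_neg hpos.not_gt]
      exact ⟨_, (hb.of_mul_pos hpos).cons (mul_self_nonneg a)⟩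

def TotallyNonnegRect {R : Type*} [CommRing R] [PartialOrder R] {p q : ℕ}
    (W : Matrix (Fin p) (Fin q) R) : Prop :=
  ∀ (k : ℕ) (r : Fin k → Fin p) (c : Fin k → Fin q), StrictMono r → StrictMono c →
    0 ≤ (W.submatrix r c).det

lemma TotallyNonnegRect.submatrix {R : Type*} [CommRing R] [PartialOrder R] {p q p' q' : ℕ}
    {W : Matrix (Fin p) (Fin q) R} (hW : TotallyNonnegRect W) {r : Fin p' → Fin p}
    {c : Fin q' → Fin q} (hr : StrictMono r) (hc : StrictMono c) :
    TotallyNonnegRect (W.submatrix r c) :=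
  fun k r' c' hr' hc' => hW k (r ∘ r') (c ∘ c') (hr.comp hr') (hc.comp hc')

def blockMatrix {ι κ R : Type*} [Zero R] [DecidableEq κ] (b : ι → κ) (v : ι → R) :
    Matrix ι κ R :=
  of fun i j => if b i = j then v i else 0

lemma blockMatrix_mulVec {ι κ R : Type*} [Fintype κ] [DecidableEq κ]
    [NonUnitalNonAssocSemiring R] (b : ι → κ) (v : ι → R) (c : κ → R) :
    blockMatrix b v *ᵥ c = fun i => v i * c (b i) := by
  ext i
  simp [blockMatrix, mulVec, dotProduct, ite_mul]

lemma SignBlocks.exists_blockMatrix_mulVec_eq {n s : ℕ} {y : Fin n → ℝ} {σ : ℝ}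
    {b : Fin n → Fin (s + 1)} (h : SignBlocks y σ b) :
    ∃ c, blockMatrix b (fun i => σ * ((-1) ^ (b i : ℕ) * y i)) *ᵥ c = y := by
  have hσ := h.sign_ne_zero
  refine ⟨fun j => (-1) ^ (j : ℕ) * σ⁻¹, funext fun i => ?_⟩
  rw [blockMatrix_mulVec]
  field_simp
  rw [← pow_mul, pow_mul', neg_one_sq, one_pow, one_mul]

/-- Cauchy–Binet in the special case of a `blockMatrix`: every minor of the product is a
nonnegative combination of minors of `A` taken on increasing columns. -/
lemma TotallyNonnegRect.mul_blockMatrix {R : Type*} [CommRing R] [PartialOrder R]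
    [IsOrderedRing R] {p n k : ℕ} {A : Matrix (Fin p) (Fin n) R} (hA : TotallyNonnegRect A)
    {b : Fin n → Fin k} (hb : Monotone b) {v : Fin n → R} (hv : ∀ i, 0 ≤ v i) :
    TotallyNonnegRect (A * blockMatrix b v) := by
  intro s r γ hr hγ
  rw [← det_transpose]
  have hrows : ((A * blockMatrix b v).submatrix r γ)ᵀ =
      fun q => ∑ i ∈ Finset.univ.filter (fun i => b i = γ q), v i • fun p => A (r p) i := by
    ext q p
    simp [blockMatrix, mul_apply, Finset.sum_filter, mul_comm]
  change 0 ≤ (detRowAlternating : (Fin s → R) [⋀^Fin s]→ₗ[R] R).toMultilinearMap _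
  rw [hrows, MultilinearMap.map_sum_finset]
  refine Finset.sum_nonneg fun c hc => ?_
  have hbc : ∀ q, b (c q) = γ q := by simpa [Fintype.mem_piFinset] using hc
  have hc_mono : StrictMono c := fun q q' hqq' => hb.reflect_lt (by simpa [hbc] using hγ hqq')
  rw [MultilinearMap.map_smul_univ, smul_eq_mul]
  exact mul_nonneg (Finset.prod_nonneg fun q _ => hv (c q))
    ((det_transpose (A.submatrix r c)).symm ▸ hA s r c hr hc_mono :)

-- Laplace expansion of `det [W | W c] = 0` along its last column.
lemma sum_neg_one_pow_mul_mulVec_mul_det_eq_zero {R : Type*} [CommRing R] [IsDomain R]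
    {m : ℕ} (W : Matrix (Fin (m + 1)) (Fin m) R) (c : Fin m → R) :
    ∑ i : Fin (m + 1), (-1) ^ (i : ℕ) * (W *ᵥ c) i * (W.submatrix i.succAbove id).det = 0 := by
  set M : Matrix (Fin (m + 1)) (Fin (m + 1)) R := of fun i => Fin.snoc (W i) ((W *ᵥ c) i)
  have hM : M.det = 0 := by
    refine exists_mulVec_eq_zero_iff.mp
      ⟨Fin.snoc c (-1), fun h => by simpa using congrFun h (Fin.last m), ?_⟩
    ext i
    simp [M, mulVec, dotProduct, Fin.sum_univ_castSucc]
  have hminor (i : Fin (m + 1)) :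
      M.submatrix i.succAbove (Fin.last m).succAbove = W.submatrix i.succAbove id := by
    ext
    simp [M, Fin.succAbove_last]
  have hsq : ((-1 : R) ^ m) ^ 2 = 1 := by
    rw [← pow_mul, mul_comm, pow_mul, neg_one_sq, one_pow]
  rw [det_succ_column M (Fin.last m),
    ← mul_eq_zero_iff_left (pow_ne_zero m (neg_ne_zero.2 one_ne_zero)), Finset.mul_sum] at hM
  rw [← hM]
  refine Finset.sum_congr rfl fun i _ => ?_
  rw [hminor]
  simp only [M, of_apply, Fin.snoc_last, Fin.val_last, pow_add]
  linear_combination (-(-1 : R) ^ (i : ℕ) * (W *ᵥ c) i * (W.submatrix i.succAbove id).det) * hsq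

lemma exists_apply_eq_zero_mulVec_eq {K ι : Type*} [Field K] [Fintype ι] [DecidableEq ι]
    {M : Matrix ι ι K} (hM : M.det = 0) (c : ι → K) :
    ∃ j c', c' j = 0 ∧ M *ᵥ c' = M *ᵥ c := by
  obtain ⟨g, hg, hMg⟩ := exists_mulVec_eq_zero_iff.mpr hM
  obtain ⟨j, hj⟩ : ∃ j, g j ≠ 0 := Function.ne_iff.mp hg
  refine ⟨j, c - (c j / g j) • g, by simp [hj], ?_⟩
  rw [mulVec_sub, mulVec_smul, hMg, smul_zero, sub_zero]

lemma submatrix_succAbove_mulVec_comp {R α : Type*} [NonUnitalNonAssocSemiring R] {m : ℕ}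
    (M : Matrix α (Fin (m + 1)) R) {c : Fin (m + 1) → R} {j : Fin (m + 1)} (hc : c j = 0) :
    M.submatrix id j.succAbove *ᵥ (c ∘ j.succAbove) = M *ᵥ c := by
  ext i
  simp [mulVec, dotProduct, Fin.sum_univ_succAbove _ j, hc]

section Alternating

variable {K : Type*} [Field K] [LinearOrder K] [IsStrictOrderedRing K]

lemma TotallyNonnegRect.det_submatrix_castSucc_eq_zero {m : ℕ}
    {W : Matrix (Fin (m + 1)) (Fin m) K} (hW : TotallyNonnegRect W) {c : Fin m → K}
    (halt : ∀ i : Fin (m + 1), 0 < (-1) ^ (i : ℕ) * (W *ᵥ c) i) :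
    (W.submatrix Fin.castSucc id).det = 0 := by
  have hterm := (Finset.sum_eq_zero_iff_of_nonneg fun i _ => mul_nonneg (halt i).le
    (hW m _ _ (Fin.strictMono_succAbove i) strictMono_id)).mp
    (sum_neg_one_pow_mul_mulVec_mul_det_eq_zero W c) (Fin.last m) (Finset.mem_univ _)
  rw [Fin.succAbove_last] at hterm
  exact (mul_eq_zero.mp hterm).resolve_left (halt _).ne'

theorem TotallyNonnegRect.not_forall_alternating_mulVec : ∀ {m : ℕ}
    {W : Matrix (Fin (m + 1)) (Fin m) K}, TotallyNonnegRect W →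
    ∀ c, ¬ ∀ i : Fin (m + 1), 0 < (-1) ^ (i : ℕ) * (W *ᵥ c) i
  | 0, W, _, c, halt => by simpa using halt 0
  | m + 1, W, hW, c, halt => by
    obtain ⟨j, c', hc'j, hc'⟩ :=
      exists_apply_eq_zero_mulVec_eq (hW.det_submatrix_castSucc_eq_zero halt) c
    refine (hW.submatrix Fin.strictMono_castSucc (Fin.strictMono_succAbove j))
      |>.not_forall_alternating_mulVec (c' ∘ j.succAbove) fun i => ?_
    have hrows : W.submatrix Fin.castSucc j.succAbove *ᵥ (c' ∘ j.succAbove) =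
        W.submatrix Fin.castSucc id *ᵥ c :=
      hc' ▸ submatrix_succAbove_mulVec_comp (W.submatrix Fin.castSucc id) hc'j
    rw [hrows]
    exact halt i.castSucc

lemma TotallyNonnegRect.not_forall_alternating_mulVec_comp {p k : ℕ}
    {B : Matrix (Fin p) (Fin (k + 1)) K} (hB : TotallyNonnegRect B) (c : Fin (k + 1) → K)
    {r : Fin (k + 2) → Fin p} (hr : StrictMono r) (σ : K) :
    ¬ ∀ i : Fin (k + 2), 0 < σ * ((-1) ^ (i : ℕ) * (B *ᵥ c) (r i)) := fun halt =>
  (hB.submatrix hr strictMono_id).not_forall_alternating_mulVec (σ • c) fun i => by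
    rw [mulVec_smul, Pi.smul_apply, smul_eq_mul, mul_left_comm]
    exact halt i

end Alternating

theorem tn_sMinus_svdp {n : ℕ} (A : Matrix (Fin n) (Fin n) ℝ)
    (hA : TotallyNonneg A) :
    ∀ x : Fin n → ℝ, sMinus (A.mulVec x) ≤ sMinus x := by
  intro x
  by_contra! hlt
  have hy : A *ᵥ x ≠ 0 := fun h => by simp [h, sMinus_zero] at hlt
  have hx : x ≠ 0 := fun h => hy (by simp [h])
  obtain ⟨b, hb⟩ := exists_signBlocks x hx
  obtain ⟨c, hc⟩ := hb.exists_blockMatrix_mulVec_eq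
  obtain ⟨b', hb'⟩ := exists_signBlocks (A *ᵥ x) hy
  obtain ⟨r, hr, halt⟩ := hb'.exists_strictMono_alternating
  have hle : sMinus x + 2 ≤ sMinus (A *ᵥ x) + 1 := by omega
  refine (TotallyNonnegRect.mul_blockMatrix hA hb.monotone hb.nonneg)
    |>.not_forall_alternating_mulVec_comp c (hr.comp (Fin.strictMono_castLE hle))
      (firstNonzero (A *ᵥ x)) fun i => ?_
  rw [← mulVec_mulVec, hc]
  exact halt (Fin.castLE hle i)
end

section
/- Let J be a constant n×n tridiagonal matrix with strictly positive entries on the superdiagonal and subdiagonal. Then there exists ε̄ > 0 such that for all ε ∈ (0, ε̄), the matrix exp(Jε) is nonsingular, totally nonnegative, and irreducible; hence (exp(Jε))^{n-1} is totally positive. -/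
open scoped Classical

/-!
For `t > 0` every minor of `exp (t • J)` is positive, which gives all four claims at once
(`exp (ε • J) ^ (n - 1) = exp (((n - 1) * ε) • J)`). The `k × k` minors of `exp (t • J)`, indexed
by pairs of `k`-subsets, form the compound matrix `G t`, and differentiating the determinants row by
row gives `G' = J_k G`, `G 0 = 1`, where `J_k` is the additive compound of `J`; hence
`G t = exp (t • J_k)`. Because `J` is tridiagonal with positive off-diagonal entries, `J_k` is
nonnegative off the diagonal, and its positive entries join two `k`-subsets whenever one arises
from the other by moving an element to a free neighbouring position. Such moves connect every
`k`-subset to `{0, …, k - 1}`, so `exp (t • J_k)` is entrywise positive.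
-/

open Matrix NormedSpace
open scoped Nat

namespace Matrix

variable {ι : Type*} [Fintype ι]

theorem hasDerivAt_mul_apply {A B : ℝ → Matrix ι ι ℝ} {A' B' : Matrix ι ι ℝ} {t : ℝ}
    (hA : ∀ i j, HasDerivAt (fun s => A s i j) (A' i j) t)
    (hB : ∀ i j, HasDerivAt (fun s => B s i j) (B' i j) t) (i j : ι) :
    HasDerivAt (fun s => (A s * B s) i j) ((A' * B t + A t * B') i j) t := by
  simp only [mul_apply, add_apply, ← Finset.sum_add_distrib]
  exact HasDerivAt.fun_sum fun l _ => (hA i l).mul (hB l j)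

variable [DecidableEq ι]

theorem hasDerivAt_det {A : ℝ → Matrix ι ι ℝ} {A' : Matrix ι ι ℝ} {t : ℝ}
    (h : ∀ i j, HasDerivAt (fun s => A s i j) (A' i j) t) :
    HasDerivAt (fun s => (A s).det) (∑ i, ((A t).updateRow i (A' i)).det) t := by
  let D : ContinuousMultilinearMap ℝ (fun _ : ι => ι → ℝ) ℝ :=
    { (detRowAlternating : (ι → ℝ) [⋀^ι]→ₗ[ℝ] ℝ).toMultilinearMap with
      cont := continuous_id.matrix_det }
  have hA : HasDerivAt (fun s => (A s : ι → ι → ℝ)) A' t :=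
    hasDerivAt_pi.2 fun i => hasDerivAt_pi.2 fun j => h i j
  exact ((D.hasFDerivAt (A t)).comp_hasDerivAt t hA).congr_deriv (D.linearDeriv_apply _ _)

theorem hasDerivAt_exp_smul_apply (A : Matrix ι ι ℝ) (t : ℝ) (i j : ι) :
    HasDerivAt (fun s : ℝ => exp (s • A) i j) ((A * exp (t • A)) i j) t := by
  let _ : NormedRing (Matrix ι ι ℝ) := Matrix.linftyOpNormedRing
  let _ : NormedAlgebra ℝ (Matrix ι ι ℝ) := Matrix.linftyOpNormedAlgebra
  exact ((entryLinearMap ℝ ℝ i j).toContinuousLinearMap.hasFDerivAt).comp_hasDerivAt t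
    (hasDerivAt_exp_smul_const' A t)

theorem eq_exp_smul_of_hasDerivAt {G : ℝ → Matrix ι ι ℝ} {K : Matrix ι ι ℝ} (h₀ : G 0 = 1)
    (hG : ∀ t i j, HasDerivAt (fun s => G s i j) ((K * G t) i j) t) (t : ℝ) :
    G t = exp (t • K) := by
  have hderiv : ∀ s i j, HasDerivAt (fun u => (exp (u • -K) * G u) i j) 0 s := by
    intro s i j
    convert hasDerivAt_mul_apply (hasDerivAt_exp_smul_apply (-K) s) (hG s) i j using 1
    have : Commute (exp (s • -K)) K := ((Commute.refl K).neg_left.smul_left s).exp_left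
    rw [← Matrix.mul_assoc, this.eq, neg_mul, neg_mul, neg_add_cancel, zero_apply]
  have hconst : exp (t • -K) * G t = 1 := by
    ext i j
    rw [is_const_of_deriv_eq_zero (fun u => (hderiv u i j).differentiableAt)
      (fun u => (hderiv u i j).deriv) t 0, zero_smul, exp_zero, Matrix.one_mul, h₀]
  have hinv : exp (t • K) * exp (t • -K) = 1 := by
    rw [← exp_add_of_commute _ _ ((Commute.refl K).neg_right.smul_left t |>.smul_right t),
      smul_neg, add_neg_cancel, exp_zero]
  calc G t = exp (t • K) * (exp (t • -K) * G t) := by rw [← Matrix.mul_assoc, hinv, Matrix.one_mul]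
    _ = exp (t • K) := by rw [hconst, Matrix.mul_one]

theorem pow_apply_pos_of_reflTransGen {B : Matrix ι ι ℝ} (hB : ∀ i j, 0 ≤ B i j) {i j : ι}
    (h : Relation.ReflTransGen (fun a b => 0 < B a b) i j) : ∃ m, 0 < (B ^ m) i j := by
  induction h with
  | refl => exact ⟨0, by simp⟩
  | @tail b c _ hbc ih =>
    obtain ⟨m, hm⟩ := ih
    refine ⟨m + 1, ?_⟩
    rw [pow_succ, mul_apply]
    exact Finset.sum_pos' (fun u _ => mul_nonneg (pow_apply_nonneg hB m i u) (hB u c))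
      ⟨b, Finset.mem_univ b, mul_pos hm hbc⟩

theorem exp_smul_apply_pos_of_nonneg {B : Matrix ι ι ℝ} (hB : ∀ i j, 0 ≤ B i j) {t : ℝ}
    (ht : 0 < t) {i j : ι} {m : ℕ} (hm : 0 < (B ^ m) i j) : 0 < exp (t • B) i j := by
  let _ : NormedRing (Matrix ι ι ℝ) := Matrix.linftyOpNormedRing
  let _ : NormedAlgebra ℝ (Matrix ι ι ℝ) := Matrix.linftyOpNormedAlgebra
  have hsum := Pi.hasSum.1 (Pi.hasSum.1 (exp_series_hasSum_exp' (𝕂 := ℝ) (t • B)) i) j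
  have hterm : ∀ m : ℕ, ((m !⁻¹ : ℝ) • (t • B) ^ m) i j = (m !⁻¹ : ℝ) * t ^ m * (B ^ m) i j :=
    fun m => by simp [smul_pow, mul_assoc]
  simp only [hterm] at hsum
  refine lt_of_lt_of_le (by positivity) (le_hasSum hsum m fun m' _ => ?_)
  have := pow_apply_nonneg hB m' i j
  positivity

theorem exp_smul_one (s : ℝ) : exp (s • (1 : Matrix ι ι ℝ)) = Real.exp s • 1 := by
  rw [smul_one_eq_diagonal, exp_diagonal, smul_one_eq_diagonal, Pi.exp_def, Real.exp_eq_exp_ℝ]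

theorem exp_smul_apply_pos {K : Matrix ι ι ℝ} (hK : ∀ i j, i ≠ j → 0 ≤ K i j) {i j : ι}
    (hij : Relation.ReflTransGen (fun a b => 0 < K a b) i j) {t : ℝ} (ht : 0 < t) :
    0 < exp (t • K) i j := by
  -- shifting `K` by `c • 1` makes it nonnegative and only scales the exponential
  set c := ∑ u, |K u u|
  set B := K + c • (1 : Matrix ι ι ℝ)
  have hc : 0 ≤ c := Finset.sum_nonneg fun u _ => abs_nonneg _
  have hKB : ∀ a b, K a b ≤ B a b := fun a b => by
    have : (0 : ℝ) ≤ (1 : Matrix ι ι ℝ) a b := by rw [one_apply]; split_ifs <;> norm_num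
    simpa [B] using mul_nonneg hc this
  have hB : ∀ a b, 0 ≤ B a b := fun a b => by
    rcases eq_or_ne a b with rfl | hab
    · have : |K a a| ≤ c := Finset.single_le_sum (f := fun u => |K u u|)
        (fun u _ => abs_nonneg _) (Finset.mem_univ a)
      simp only [B, add_apply, smul_apply, one_apply_eq, smul_eq_mul, mul_one]
      linarith [neg_abs_le (K a a)]
    · exact (hK a b hab).trans (hKB a b)
  obtain ⟨m, hm⟩ := pow_apply_pos_of_reflTransGen hB
    (Relation.ReflTransGen.mono (fun a b (h : 0 < K a b) => h.trans_le (hKB a b)) _ _ hij)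
  have hsplit : t • K = (-(t * c)) • (1 : Matrix ι ι ℝ) + t • B := by
    simp only [B]
    module
  rw [hsplit, exp_add_of_commute _ _ ((Commute.one_left _).smul_left _), exp_smul_one,
    smul_mul, Matrix.one_mul, smul_apply, smul_eq_mul]
  exact mul_pos (Real.exp_pos _) (exp_smul_apply_pos_of_nonneg hB ht hm)

end Matrix

theorem Fin.strictMono_update_of_adj {n k : ℕ} {r : Fin k → Fin n} (hr : StrictMono r) {i : Fin k}
    {y : Fin n} (hy : ∀ a, r a ≠ y) (hadj : (SimpleGraph.pathGraph n).Adj (r i) y) :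
    StrictMono (Function.update r i y) := by
  rw [SimpleGraph.pathGraph_adj] at hadj
  have hne : ∀ a, (r a).val ≠ y.val := fun a h => hy a (Fin.ext h)
  intro a b hab
  have hrab : (r a).val < (r b).val := hr hab
  rcases eq_or_ne a i with rfl | ha
  · rw [Function.update_self, Function.update_of_ne hab.ne']
    have := hne b
    exact Fin.lt_def.2 (by omega)
  · rw [Function.update_of_ne ha]
    rcases eq_or_ne b i with rfl | hb
    · rw [Function.update_self]
      have := hne a
      exact Fin.lt_def.2 (by omega)
    · rwa [Function.update_of_ne hb]

abbrev KSubset (n k : ℕ) := {s : Finset (Fin n) // s.card = k}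

namespace KSubset

variable {n k : ℕ}

def enum (S : KSubset n k) : Fin k → Fin n := S.1.orderEmbOfFin S.2

theorem enum_strictMono (S : KSubset n k) : StrictMono S.enum :=
  (S.1.orderEmbOfFin S.2).strictMono

theorem enum_mem (S : KSubset n k) (i : Fin k) : S.enum i ∈ S.1 :=
  Finset.orderEmbOfFin_mem _ _ _

theorem exists_enum_eq (S : KSubset n k) {x : Fin n} (hx : x ∈ S.1) : ∃ i, S.enum i = x := by
  rw [← Set.mem_range, enum, Finset.range_orderEmbOfFin]
  exact hx

theorem enum_eq_of_strictMono (S : KSubset n k) {f : Fin k → Fin n} (hf : StrictMono f)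
    (hmem : ∀ i, f i ∈ S.1) : S.enum = f :=
  (Finset.orderEmbOfFin_unique S.2 hmem hf).symm

def ofStrictMono {r : Fin k → Fin n} (hr : StrictMono r) : KSubset n k :=
  ⟨Finset.univ.image r, by
    rw [Finset.card_image_of_injective _ hr.injective, Finset.card_univ, Fintype.card_fin]⟩

theorem enum_ofStrictMono {r : Fin k → Fin n} (hr : StrictMono r) : (ofStrictMono hr).enum = r :=
  enum_eq_of_strictMono _ hr fun i => Finset.mem_image_of_mem r (Finset.mem_univ i)

def move (S : KSubset n k) {x y : Fin n} (hx : x ∈ S.1) (hy : y ∉ S.1) : KSubset n k :=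
  ⟨insert y (S.1.erase x), by
    rw [Finset.card_insert_of_notMem fun h => hy (Finset.mem_of_mem_erase h),
      Finset.card_erase_add_one hx, S.2]⟩

theorem enum_move_of_adj (S : KSubset n k) (i : Fin k) {y : Fin n} (hy : y ∉ S.1)
    (hadj : (SimpleGraph.pathGraph n).Adj (S.enum i) y) :
    (S.move (S.enum_mem i) hy).enum = Function.update S.enum i y := by
  refine enum_eq_of_strictMono _ (Fin.strictMono_update_of_adj S.enum_strictMono
    (fun a h => hy (h ▸ S.enum_mem a)) hadj) fun a => ?_
  rcases eq_or_ne a i with rfl | ha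
  · rw [Function.update_self]
    exact Finset.mem_insert_self _ _
  · rw [Function.update_of_ne ha]
    exact Finset.mem_insert_of_mem (Finset.mem_erase.2
      ⟨fun h => ha (S.enum_strictMono.injective h), S.enum_mem a⟩)

theorem sum_ite_val_eq {M : Type*} [AddCommMonoid M] (s : Finset (Fin n)) (f : KSubset n k → M) :
    (∑ U : KSubset n k, if U.1 = s then f U else 0) = if h : s.card = k then f ⟨s, h⟩ else 0 := by
  split_ifs with h
  · rw [Fintype.sum_eq_single ⟨s, h⟩ fun U hU => if_neg fun hs => hU (Subtype.ext hs), if_pos rfl]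
  · exact Finset.sum_eq_zero fun U _ => if_neg fun (hs : U.1 = s) => h (hs ▸ U.2)

def MoveAdj (S T : KSubset n k) : Prop :=
  ∃ x ∈ S.1, ∃ y ∉ S.1, (SimpleGraph.pathGraph n).Adj x y ∧ T.1 = insert y (S.1.erase x)

theorem MoveAdj.symm {S T : KSubset n k} (h : MoveAdj S T) : MoveAdj T S := by
  obtain ⟨x, hx, y, hy, hxy, hT⟩ := h
  have hyx : y ∉ S.1.erase x := fun h => hy (Finset.mem_of_mem_erase h)
  refine ⟨y, hT ▸ Finset.mem_insert_self _ _, x, ?_, hxy.symm, ?_⟩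
  · rw [hT, Finset.mem_insert, not_or]
    exact ⟨hxy.ne, Finset.notMem_erase _ _⟩
  · rw [hT, Finset.erase_insert hyx, Finset.insert_erase hx]

def weight (S : KSubset n k) : ℕ := ∑ x ∈ S.1, x.val

theorem exists_moveAdj_weight_lt (S : KSubset n k) (hS : ¬ IsLowerSet (S.1 : Set (Fin n))) :
    ∃ T, MoveAdj S T ∧ T.weight < S.weight := by
  obtain ⟨a, b, hba, ha, hb⟩ : ∃ a b, b ≤ a ∧ a ∈ S.1 ∧ b ∉ S.1 := by
    simpa [IsLowerSet] using hS
  have hab : b < a := lt_of_le_of_ne hba fun h => hb (h ▸ ha)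
  -- the least element of `S` above `b` has a free left neighbour
  obtain ⟨x, ⟨hxS, hbx⟩, hxmin⟩ : ∃ x, (x ∈ S.1 ∧ b < x) ∧ ∀ z ∈ S.1, b < z → x ≤ z :=
    have hne : (S.1.filter (b < ·)).Nonempty := ⟨a, Finset.mem_filter.2 ⟨ha, hab⟩⟩
    ⟨_, Finset.mem_filter.1 (Finset.min'_mem _ hne),
      fun z hz hbz => Finset.min'_le _ z (Finset.mem_filter.2 ⟨hz, hbz⟩)⟩
  obtain ⟨y, hyx⟩ : ∃ y : Fin n, y.val + 1 = x.val :=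
    ⟨⟨x.val - 1, by omega⟩, by have := Fin.lt_def.1 hbx; simp only; omega⟩
  have hy : y ∉ S.1 := by
    intro hyS
    rcases eq_or_lt_of_le (show b ≤ y from Fin.le_def.2 (by have := Fin.lt_def.1 hbx; omega))
      with rfl | hby
    · exact hb hyS
    · exact absurd (hxmin y hyS hby) (not_le.2 (Fin.lt_def.2 (by omega)))
  refine ⟨S.move hxS hy, ⟨x, hxS, y, hy, SimpleGraph.pathGraph_adj.2 (Or.inr hyx), rfl⟩, ?_⟩
  have hsum := Finset.sum_erase_add _ (fun z : Fin n => z.val) hxS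
  simp only [weight, move, Finset.sum_insert fun h => hy (Finset.mem_of_mem_erase h)]
  omega

theorem eq_of_isLowerSet {S T : KSubset n k} (hS : IsLowerSet (S.1 : Set (Fin n)))
    (hT : IsLowerSet (T.1 : Set (Fin n))) : S = T := by
  apply Subtype.ext
  rcases hS.total hT with h | h
  · exact Finset.eq_of_subset_of_card_le (Finset.coe_subset.1 h) (by rw [S.2, T.2])
  · exact (Finset.eq_of_subset_of_card_le (Finset.coe_subset.1 h) (by rw [S.2, T.2])).symm

theorem reflTransGen_moveAdj (S T : KSubset n k) : Relation.ReflTransGen MoveAdj S T := by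
  induction hw : S.weight + T.weight using Nat.strong_induction_on generalizing S T with
  | _ w ih =>
  by_cases hS : IsLowerSet (S.1 : Set (Fin n))
  · by_cases hT : IsLowerSet (T.1 : Set (Fin n))
    · rw [eq_of_isLowerSet hS hT]
    · obtain ⟨T', hTT', hlt⟩ := T.exists_moveAdj_weight_lt hT
      exact (ih _ (by omega) S T' rfl).tail hTT'.symm
  · obtain ⟨S', hSS', hlt⟩ := S.exists_moveAdj_weight_lt hS
    exact .head hSS' (ih _ (by omega) S' T rfl)

end KSubset

section Compound

open KSubset

variable {n k : ℕ}

def compound {R : Type*} [CommRing R] (A : Matrix (Fin n) (Fin n) R) (k : ℕ) :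
    Matrix (KSubset n k) (KSubset n k) R :=
  of fun S T => (A.submatrix S.enum T.enum).det

theorem compound_one {R : Type*} [CommRing R] : compound (1 : Matrix (Fin n) (Fin n) R) k = 1 := by
  ext S T
  rcases eq_or_ne S T with rfl | hST
  · rw [compound, of_apply, submatrix_one _ S.enum_strictMono.injective, det_one, one_apply_eq]
  · obtain ⟨x, hxS, hxT⟩ : ∃ x ∈ S.1, x ∉ T.1 := by
      by_contra! h
      exact hST (Subtype.ext (Finset.eq_of_subset_of_card_le h (by rw [S.2, T.2])))
    obtain ⟨i, rfl⟩ := S.exists_enum_eq hxS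
    rw [one_apply_ne hST]
    refine det_eq_zero_of_row_eq_zero i fun j => one_apply_ne fun h => hxT ?_
    exact h ▸ T.enum_mem j

/-- The additive compound of `J`, valid as such only for tridiagonal `J`: then the moves of
`x ∈ S` to `y` that contribute keep the order of the elements, so no signs appear. -/
def tridiagAddCompound (J : Matrix (Fin n) (Fin n) ℝ) (k : ℕ) :
    Matrix (KSubset n k) (KSubset n k) ℝ :=
  of fun S T => ∑ i : Fin k, ∑ l : Fin n,
    if T.1 = insert l (S.1.erase (S.enum i)) then J (S.enum i) l else 0

variable {J : Matrix (Fin n) (Fin n) ℝ}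
  (htri : ∀ i j : Fin n, (i.val + 1 < j.val ∨ j.val + 1 < i.val) → J i j = 0)
include htri

theorem mul_det_updateRow_submatrix (E : Matrix (Fin n) (Fin n) ℝ) (S T : KSubset n k)
    (i : Fin k) (l : Fin n) :
    J (S.enum i) l * ((E.submatrix S.enum T.enum).updateRow i fun j => E l (T.enum j)).det
      = ∑ U : KSubset n k, if U.1 = insert l (S.1.erase (S.enum i))
          then J (S.enum i) l * compound E k U T else 0 := by
  rw [sum_ite_val_eq]
  by_cases hJ : J (S.enum i) l = 0
  · simp [hJ]
  -- otherwise `l` is `S.enum i` or its neighbour: `l ∈ S` repeats a row unless `l = S.enum i`,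
  -- and a neighbour `l ∉ S` takes the place of `S.enum i` without reordering the rows
  by_cases hl : l ∈ S.1
  · rcases eq_or_ne l (S.enum i) with rfl | hli
    · rw [dif_pos (by rw [Finset.insert_erase hl, S.2])]
      have hrow : (fun j => E (S.enum i) (T.enum j)) = E.submatrix S.enum T.enum i := rfl
      simp only [Finset.insert_erase hl, hrow, updateRow_eq_self]
      rfl
    · obtain ⟨i', rfl⟩ := S.exists_enum_eq hl
      have hii' : i ≠ i' := fun h => hli (h ▸ rfl)
      rw [det_zero_of_row_eq hii' (by ext j; simp [updateRow_ne hii'.symm]), mul_zero, dif_neg]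
      rw [Finset.card_insert_of_mem (Finset.mem_erase.2 ⟨hli, hl⟩),
        Finset.card_erase_of_mem (S.enum_mem i), S.2]
      have := i.pos
      omega
  · have hadj : (SimpleGraph.pathGraph n).Adj (S.enum i) l := by
      have hne : (S.enum i).val ≠ l.val := fun h => hl (Fin.ext h ▸ S.enum_mem i)
      have := mt (htri _ _) hJ
      rw [SimpleGraph.pathGraph_adj]
      omega
    have hcard : (insert l (S.1.erase (S.enum i))).card = k := (S.move (S.enum_mem i) hl).2
    rw [dif_pos hcard]
    congr 1
    change _ = (E.submatrix (S.move (S.enum_mem i) hl).enum T.enum).det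
    rw [enum_move_of_adj S i hl hadj]
    congr 1
    ext a j
    rcases eq_or_ne a i with rfl | ha
    · simp
    · simp [updateRow_ne ha, Function.update_of_ne ha]

theorem sum_det_updateRow_submatrix_mul (E : Matrix (Fin n) (Fin n) ℝ) (S T : KSubset n k) :
    ∑ i, ((E.submatrix S.enum T.enum).updateRow i ((J * E).submatrix S.enum T.enum i)).det
      = (tridiagAddCompound J k * compound E k) S T := by
  have hexpand : ∀ i, ((E.submatrix S.enum T.enum).updateRow i
      ((J * E).submatrix S.enum T.enum i)).det
        = ∑ l, J (S.enum i) l * ((E.submatrix S.enum T.enum).updateRow i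
            fun j => E l (T.enum j)).det := by
    intro i
    have hrow : (J * E).submatrix S.enum T.enum i
        = ∑ l, J (S.enum i) l • fun j => E l (T.enum j) := by
      ext j
      simp [mul_apply, Finset.sum_apply]
    rw [hrow]
    exact ((detRowAlternating : (Fin k → ℝ) [⋀^Fin k]→ₗ[ℝ] ℝ).map_update_sum _ i _ _).trans
      (Finset.sum_congr rfl fun l _ => det_updateRow_smul _ _ _ _)
  simp only [hexpand, mul_det_updateRow_submatrix htri, mul_apply, tridiagAddCompound, of_apply,
    Finset.sum_mul, ite_mul, zero_mul]
  exact (Finset.sum_congr rfl fun i _ => Finset.sum_comm).trans Finset.sum_comm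

theorem hasDerivAt_compound_exp (t : ℝ) (S T : KSubset n k) :
    HasDerivAt (fun s => compound (exp (s • J)) k S T)
      ((tridiagAddCompound J k * compound (exp (t • J)) k) S T) t :=
  (hasDerivAt_det fun _ _ => hasDerivAt_exp_smul_apply J t _ _).congr_deriv
    (sum_det_updateRow_submatrix_mul htri _ S T)

theorem compound_exp (t : ℝ) : compound (exp (t • J)) k = exp (t • tridiagAddCompound J k) :=
  eq_exp_smul_of_hasDerivAt (by rw [zero_smul, exp_zero, compound_one])
    (hasDerivAt_compound_exp htri) t

end Compound

section Positivity

open KSubset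

variable {n k : ℕ} {J : Matrix (Fin n) (Fin n) ℝ}
  (htri : ∀ i j : Fin n, (i.val + 1 < j.val ∨ j.val + 1 < i.val) → J i j = 0)
  (hadj : ∀ x y, (SimpleGraph.pathGraph n).Adj x y → 0 < J x y)
include htri hadj

theorem apply_nonneg_of_ne {x y : Fin n} (hxy : x ≠ y) : 0 ≤ J x y := by
  by_cases h : (SimpleGraph.pathGraph n).Adj x y
  · exact (hadj x y h).le
  · rw [SimpleGraph.pathGraph_adj] at h
    have := Fin.val_ne_of_ne hxy
    rw [htri x y (by omega)]

theorem tridiagAddCompound_term_nonneg {S T : KSubset n k} (hST : S ≠ T) (i : Fin k) (l : Fin n) :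
    0 ≤ if T.1 = insert l (S.1.erase (S.enum i)) then J (S.enum i) l else 0 := by
  split_ifs with hT
  · refine apply_nonneg_of_ne htri hadj fun h => hST (Subtype.ext ?_)
    rw [hT, ← h, Finset.insert_erase (S.enum_mem i)]
  · rfl

theorem tridiagAddCompound_nonneg_of_ne {S T : KSubset n k} (hST : S ≠ T) :
    0 ≤ tridiagAddCompound J k S T := by
  rw [tridiagAddCompound, of_apply]
  exact Finset.sum_nonneg fun i _ => Finset.sum_nonneg fun l _ =>
    tridiagAddCompound_term_nonneg htri hadj hST i l

theorem tridiagAddCompound_pos_of_moveAdj {S T : KSubset n k} (h : MoveAdj S T) :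
    0 < tridiagAddCompound J k S T := by
  obtain ⟨x, hx, y, hy, hxy, hT⟩ := h
  obtain ⟨i, rfl⟩ := S.exists_enum_eq hx
  have hST : S ≠ T := fun h => hy (h ▸ hT ▸ Finset.mem_insert_self _ _)
  calc 0 < J (S.enum i) y := hadj _ _ hxy
    _ = if T.1 = insert y (S.1.erase (S.enum i)) then J (S.enum i) y else 0 := (if_pos hT).symm
    _ ≤ ∑ l, if T.1 = insert l (S.1.erase (S.enum i)) then J (S.enum i) l else 0 :=
      Finset.single_le_sum (fun l _ => tridiagAddCompound_term_nonneg htri hadj hST i l)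
        (Finset.mem_univ y)
    _ ≤ tridiagAddCompound J k S T :=
      Finset.single_le_sum (f := fun i => ∑ l, _)
        (fun i _ => Finset.sum_nonneg fun l _ => tridiagAddCompound_term_nonneg htri hadj hST i l)
        (Finset.mem_univ i)

theorem totallyPos_exp_smul {t : ℝ} (ht : 0 < t) : TotallyPos (exp (t • J)) := by
  intro k r c hr hc
  have hconn : Relation.ReflTransGen (fun S T => 0 < tridiagAddCompound J k S T)
      (ofStrictMono hr) (ofStrictMono hc) :=
    Relation.ReflTransGen.mono (fun _ _ => tridiagAddCompound_pos_of_moveAdj htri hadj) _ _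
      (reflTransGen_moveAdj _ _)
  have h := congrFun (congrFun (compound_exp htri t) (ofStrictMono hr)) (ofStrictMono hc)
  rw [compound, of_apply, enum_ofStrictMono, enum_ofStrictMono] at h
  rw [h]
  exact exp_smul_apply_pos (fun _ _ => tridiagAddCompound_nonneg_of_ne htri hadj) hconn ht

end Positivity

section TotalPositivity

variable {n : ℕ}

theorem TotallyPos.apply_pos {A : Matrix (Fin n) (Fin n) ℝ} (h : TotallyPos A) (i j : Fin n) :
    0 < A i j := by
  simpa using h 1 (fun _ => i) (fun _ => j) (Subsingleton.strictMono _) (Subsingleton.strictMono _)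

theorem TotallyPos.totallyNonneg {A : Matrix (Fin n) (Fin n) ℝ} (h : TotallyPos A) :
    TotallyNonneg A :=
  fun k r c hr hc => (h k r c hr hc).le

theorem totallyPos_one_of_le_one (hn : n ≤ 1) : TotallyPos (1 : Matrix (Fin n) (Fin n) ℝ) := by
  intro k r c hr _
  have : Subsingleton (Fin n) := Fin.subsingleton_iff_le_one.2 hn
  rw [Subsingleton.elim c r, submatrix_one _ hr.injective, det_one]
  exact one_pos

theorem matIrreducible_of_forall_pos {A : Matrix (Fin n) (Fin n) ℝ} (h : ∀ i j, 0 < A i j) :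
    MatIrreducible A := by
  rintro S ⟨i, hi⟩ hS
  obtain ⟨j, hj⟩ : ∃ j, j ∉ S := by
    by_contra! hall
    exact hS (Set.eq_univ_of_forall hall)
  exact ⟨i, hi, j, hj, (h i j).ne'⟩

end TotalPositivity

theorem exp_tridiagonal_oscillatory {n : ℕ} (J : Matrix (Fin n) (Fin n) ℝ)
    (htri : ∀ i j : Fin n, (i.val + 1 < j.val ∨ j.val + 1 < i.val) → J i j = 0)
    (hsup : ∀ i j : Fin n, i.val + 1 = j.val → 0 < J i j)
    (hsub : ∀ i j : Fin n, j.val + 1 = i.val → 0 < J i j) :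
    ∃ εbar : ℝ, 0 < εbar ∧ ∀ ε : ℝ, 0 < ε → ε < εbar →
      IsUnit (NormedSpace.exp (ε • J)).det ∧
      TotallyNonneg (NormedSpace.exp (ε • J)) ∧
      MatIrreducible (NormedSpace.exp (ε • J)) ∧
      TotallyPos ((NormedSpace.exp (ε • J)) ^ (n - 1)) := by
  have hadj : ∀ x y, (SimpleGraph.pathGraph n).Adj x y → 0 < J x y := fun x y h =>
    (SimpleGraph.pathGraph_adj.1 h).elim (hsup x y) (hsub x y)
  refine ⟨1, one_pos, fun ε hε _ => ?_⟩
  have hTP := totallyPos_exp_smul htri hadj hε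
  refine ⟨(isUnit_iff_isUnit_det _).1 (isUnit_exp _), hTP.totallyNonneg,
    matIrreducible_of_forall_pos hTP.apply_pos, ?_⟩
  rcases Nat.lt_or_ge n 2 with hn | hn
  · rw [show n - 1 = 0 by omega, pow_zero]
    exact totallyPos_one_of_le_one (by omega)
  · rw [← Matrix.exp_nsmul, ← Nat.cast_smul_eq_nsmul ℝ, smul_smul]
    exact totallyPos_exp_smul htri hadj (mul_pos (by exact_mod_cast (by omega : 0 < n - 1)) hε)
end
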